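/- Under Assumptions 1, 2 and 3(b): (i) for every h ∈ ℝ^d and V ∈ S(H), the Hessian operator ∇²G_h(V) is self-adjoint on S(H) (with respect to the Frobenius inner product) and satisfies 0 ≤ ⟨∇²G_h(V)(A), A⟩_F ≤ C‖A‖_F² for all A ∈ S(H) (i.e. all its eigenvalues lie in [0,C]); (ii) there is a positive constant c_m such that ⟨∇²G_m(Γ_m)(A), A⟩_F ≥ c_m ‖A‖_F² for all A ∈ S(H); (iii) there are positive constants ε, ε' such that for all h ∈ ℝ^d with ‖h − m‖ ≤ ε and all V ∈ S(H) with ‖V − Γ_m‖_F ≤ ε', ⟨∇²G_h(V)(A), A⟩_F ≥ (c_m/2) ‖A‖_F² for all A ∈ S(H). -/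

import Mathlib

open MeasureTheory ProbabilityTheory Filter
open scoped ENNReal NNReal RealInnerProductSpace BigOperators

noncomputable section

/-- The space `S(H)` of `d × d` real matrices, viewed as a Euclidean space, so that its
norm is the Frobenius norm and its inner product `⟪A, B⟫ = ∑ i j, A i j * B i j = tr (Aᵀ B)`
is the Frobenius inner product. -/
abbrev Mat (d : ℕ) := EuclideanSpace ℝ (Fin d × Fin d)

/-- `Y(h) = (x − h)(x − h)ᵀ`. -/
def Ymat {d : ℕ} (x h : EuclideanSpace ℝ (Fin d)) : Mat d :=
  (WithLp.equiv 2 _).symm (fun p => (x p.1 - h p.1) * (x p.2 - h p.2))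

variable {d : ℕ} {Ω : Type*} [MeasurableSpace Ω]

/-- `G_h(V) = E[‖Y(h) − V‖_F − ‖Y(h)‖_F]`. -/
def Gfun (P : Measure Ω) (X : Ω → EuclideanSpace ℝ (Fin d))
    (h : EuclideanSpace ℝ (Fin d)) (V : Mat d) : ℝ :=
  ∫ ω, (‖Ymat (X ω) h - V‖ - ‖Ymat (X ω) h‖) ∂P

/-- The gradient `∇G_h(V) = −E[(Y(h) − V)/‖Y(h) − V‖_F]`. -/
def gradG (P : Measure Ω) (X : Ω → EuclideanSpace ℝ (Fin d))
    (h : EuclideanSpace ℝ (Fin d)) (V : Mat d) : Mat d :=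
  - ∫ ω, ‖Ymat (X ω) h - V‖⁻¹ • (Ymat (X ω) h - V) ∂P

/-- The Hessian operator
`∇²G_h(V)(A) = E[(1/‖Y(h) − V‖_F)(A − ⟪Y(h) − V, A⟫_F (Y(h) − V)/‖Y(h) − V‖_F²)]`. -/
def hessG (P : Measure Ω) (X : Ω → EuclideanSpace ℝ (Fin d))
    (h : EuclideanSpace ℝ (Fin d)) (V : Mat d) (A : Mat d) : Mat d :=
  ∫ ω, ‖Ymat (X ω) h - V‖⁻¹ •
    (A - (‖Ymat (X ω) h - V‖ ^ 2)⁻¹ • (⟪Ymat (X ω) h - V, A⟫ • (Ymat (X ω) h - V))) ∂P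

/-!
The integrand of `∇²G_h(V)` is the Hessian of the norm at `u = Y(h) − V`,
`A ↦ ‖u‖⁻¹ (A − ⟪u/‖u‖, A⟫ u/‖u‖)`: a self-adjoint map whose quadratic form lies between `0`
and `‖u‖⁻¹‖A‖²`, so integrating against `E‖Y(h) − V‖⁻¹ ≤ C` gives (i).

That quadratic form vanishes only when `u` is parallel to `A`. If `Y(m) − Γ` were almost surely
parallel to `A`, its coordinate along `A` would, by Markov's inequality for
`E‖Y(m) − V‖⁻² ≤ C` with `V` on the line `Γ + ℝA`, give every interval of length `2r` mass
`O(r²)`; halving intervals repeatedly shows that such a law is zero. Hence the quadratic form of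
`∇²G_m(Γ)` is positive on the unit sphere, and compactness gives `c_m` in (ii).

For (iii), the quadratic form of the Hessian of the norm is Lipschitz in `u` with weight
`‖u‖⁻¹‖v‖⁻¹ ≤ ‖u‖⁻² + ‖v‖⁻²`. Where `‖X‖ ≤ R`, the perturbation `Y(h) − V − (Y(m) − Γ)` is
`O(‖h − m‖ + ‖V − Γ‖)`, and the tail `‖X‖ > R` costs at most `‖A‖² E[‖Y(m) − Γ‖⁻¹; ‖X‖ > R]`,
which is small for `R` large.
-/

lemma abs_inv_mul_sq_sub_sub_le {s t a b N D : ℝ} (hs : 0 < s) (ht : 0 < t)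
    (ha : |a| ≤ s * N) (hb : |b| ≤ t * N) (hst : |s - t| ≤ D) (hab : |a - b| ≤ D * N) :
    |s⁻¹ * (N ^ 2 - (s ^ 2)⁻¹ * a ^ 2) - t⁻¹ * (N ^ 2 - (t ^ 2)⁻¹ * b ^ 2)|
      ≤ 5 * D * N ^ 2 / (s * t) := by
  set α := a / s
  set β := b / t
  have hN : 0 ≤ N := by nlinarith [abs_nonneg a]
  have hD : 0 ≤ D := (abs_nonneg _).trans hst
  have hα : |α| ≤ N := by rw [abs_div, abs_of_pos hs, div_le_iff₀ hs]; linarith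
  have hβ : |β| ≤ N := by rw [abs_div, abs_of_pos ht, div_le_iff₀ ht]; linarith
  have hαβ : |α - β| ≤ 2 * D * N / t := by
    have e : α - β = ((a - b) + α * (t - s)) / t := by
      simp only [α, β]; field_simp; ring
    rw [e, abs_div, abs_of_pos ht, div_le_div_iff_of_pos_right ht]
    calc |(a - b) + α * (t - s)| ≤ |a - b| + |α| * |t - s| := by
          rw [← abs_mul]; exact abs_add_le _ _
      _ ≤ D * N + N * D := by
          rw [abs_sub_comm t s]
          gcongr
      _ = 2 * D * N := by ring
  have e : s⁻¹ * (N ^ 2 - (s ^ 2)⁻¹ * a ^ 2) - t⁻¹ * (N ^ 2 - (t ^ 2)⁻¹ * b ^ 2)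
      = (N ^ 2 - β ^ 2) * ((t - s) / (s * t)) + (β - α) * (β + α) / s := by
    simp only [α, β]; field_simp; ring
  have hβ2 : 0 ≤ N ^ 2 - β ^ 2 ∧ N ^ 2 - β ^ 2 ≤ N ^ 2 := by
    constructor <;> nlinarith [sq_abs β, abs_nonneg β]
  rw [e]
  calc |(N ^ 2 - β ^ 2) * ((t - s) / (s * t)) + (β - α) * (β + α) / s|
      ≤ N ^ 2 * (D / (s * t)) + (2 * D * N / t) * (2 * N) / s := by
        refine (abs_add_le _ _).trans (add_le_add ?_ ?_)
        · rw [abs_mul, abs_div, abs_of_pos (mul_pos hs ht), abs_of_nonneg hβ2.1, abs_sub_comm]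
          gcongr
          exact hβ2.2
        · rw [abs_div, abs_mul, abs_of_pos hs, abs_sub_comm]
          gcongr
          calc |β + α| ≤ |β| + |α| := abs_add_le _ _
            _ ≤ 2 * N := by linarith
    _ = 5 * D * N ^ 2 / (s * t) := by field_simp; ring

section HessNorm

variable {E : Type*} [NormedAddCommGroup E] [InnerProductSpace ℝ E]

def hessNorm (u A : E) : E := ‖u‖⁻¹ • (A - (‖u‖ ^ 2)⁻¹ • (⟪u, A⟫ • u))

lemma inner_hessNorm (u A B : E) :
    ⟪hessNorm u A, B⟫ = ‖u‖⁻¹ * (⟪A, B⟫ - (‖u‖ ^ 2)⁻¹ * (⟪u, A⟫ * ⟪u, B⟫)) := by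
  simp [hessNorm, inner_sub_left, real_inner_smul_left]

lemma inner_hessNorm_comm (u A B : E) : ⟪hessNorm u A, B⟫ = ⟪A, hessNorm u B⟫ := by
  rw [real_inner_comm (hessNorm u B), inner_hessNorm, inner_hessNorm, real_inner_comm A B]
  ring

lemma inner_hessNorm_self (u A : E) :
    ⟪hessNorm u A, A⟫ = ‖u‖⁻¹ * (‖A‖ ^ 2 - (‖u‖ ^ 2)⁻¹ * ⟪u, A⟫ ^ 2) := by
  rw [inner_hessNorm, real_inner_self_eq_norm_sq]
  ring

lemma inner_hessNorm_self_nonneg (u A : E) : 0 ≤ ⟪hessNorm u A, A⟫ := by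
  rw [inner_hessNorm_self]
  rcases eq_or_ne u 0 with rfl | hu
  · simp
  have hu' : 0 < ‖u‖ ^ 2 := by positivity
  refine mul_nonneg (by positivity) (sub_nonneg.mpr ?_)
  rw [inv_mul_le_iff₀ hu']
  simpa only [← sq, real_inner_self_eq_norm_sq] using real_inner_mul_inner_self_le u A

lemma inner_hessNorm_self_le (u A : E) : ⟪hessNorm u A, A⟫ ≤ ‖u‖⁻¹ * ‖A‖ ^ 2 := by
  rw [inner_hessNorm_self]
  gcongr
  exact sub_le_self _ (by positivity)

lemma norm_hessNorm_le (u A : E) : ‖hessNorm u A‖ ≤ 2 * ‖u‖⁻¹ * ‖A‖ := by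
  rcases eq_or_ne u 0 with rfl | hu
  · simp [hessNorm]
  have hu' : 0 < ‖u‖ := norm_pos_iff.mpr hu
  have hproj : ‖(‖u‖ ^ 2)⁻¹ • (⟪u, A⟫ • u)‖ ≤ ‖A‖ := by
    rw [norm_smul, norm_smul, norm_inv, norm_pow, norm_norm, Real.norm_eq_abs,
      inv_mul_le_iff₀ (by positivity)]
    nlinarith [abs_real_inner_le_norm u A]
  calc ‖hessNorm u A‖ = ‖u‖⁻¹ * ‖A - (‖u‖ ^ 2)⁻¹ • (⟪u, A⟫ • u)‖ := by
        rw [hessNorm, norm_smul, norm_inv, norm_norm]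
    _ ≤ ‖u‖⁻¹ * (‖A‖ + ‖A‖) := by grw [norm_sub_le, hproj]
    _ = 2 * ‖u‖⁻¹ * ‖A‖ := by ring

lemma hessNorm_add (u A B : E) : hessNorm u (A + B) = hessNorm u A + hessNorm u B := by
  simp only [hessNorm, inner_add_right, add_smul, smul_add, add_sub_add_comm]

lemma hessNorm_smul (u : E) (c : ℝ) (A : E) : hessNorm u (c • A) = c • hessNorm u A := by
  simp only [hessNorm, inner_smul_right, mul_smul, smul_sub, smul_comm c]

lemma exists_eq_smul_of_inner_hessNorm_self_eq_zero {u A : E} (hA : A ≠ 0)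
    (h : ⟪hessNorm u A, A⟫ = 0) : ∃ r : ℝ, u = r • A := by
  rcases eq_or_ne u 0 with rfl | hu
  · exact ⟨0, by simp⟩
  have hu' : 0 < ‖u‖ := norm_pos_iff.mpr hu
  rw [inner_hessNorm_self, mul_eq_zero, inv_eq_zero, norm_eq_zero, sub_eq_zero] at h
  have hsq := h.resolve_left hu
  rw [eq_inv_mul_iff_mul_eq₀ (by positivity)] at hsq
  have hCS : ‖⟪u, A⟫‖ = ‖u‖ * ‖A‖ := by
    rw [Real.norm_eq_abs, ← sq_eq_sq₀ (abs_nonneg _) (by positivity), sq_abs, mul_pow]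
    exact hsq.symm
  obtain ⟨r, hr, rfl⟩ := (norm_inner_eq_norm_iff hu hA).mp hCS
  exact ⟨r⁻¹, by rw [smul_smul, inv_mul_cancel₀ hr, one_smul]⟩

lemma inner_hessNorm_self_le_mul_inv_sq (u A : E) :
    ⟪hessNorm u A, A⟫ ≤ ‖u‖ * ‖A‖ ^ 2 * (‖u‖ ^ 2)⁻¹ := by
  refine (inner_hessNorm_self_le u A).trans_eq ?_
  rcases eq_or_ne u 0 with rfl | hu
  · simp
  have hu' : ‖u‖ ≠ 0 := norm_ne_zero_iff.mpr hu
  field_simp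

lemma abs_inner_hessNorm_self_sub_le (u v A : E) :
    |⟪hessNorm u A, A⟫ - ⟪hessNorm v A, A⟫|
      ≤ 3 * ‖u - v‖ * ‖A‖ ^ 2 * ((‖u‖ ^ 2)⁻¹ + (‖v‖ ^ 2)⁻¹) := by
  have hzero : ∀ w : E, |⟪hessNorm w A, A⟫| ≤ 3 * ‖w‖ * ‖A‖ ^ 2 * (‖w‖ ^ 2)⁻¹ := fun w => by
    rw [abs_of_nonneg (inner_hessNorm_self_nonneg w A), mul_assoc 3, mul_assoc 3]
    exact (inner_hessNorm_self_le_mul_inv_sq w A).trans (le_mul_of_one_le_left (by positivity)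
      (by norm_num))
  rcases eq_or_ne u 0 with rfl | hu
  · simpa [hessNorm] using hzero v
  rcases eq_or_ne v 0 with rfl | hv
  · simpa [hessNorm] using hzero u
  have hu' : 0 < ‖u‖ := norm_pos_iff.mpr hu
  have hv' : 0 < ‖v‖ := norm_pos_iff.mpr hv
  have hab : |⟪u, A⟫ - ⟪v, A⟫| ≤ ‖u - v‖ * ‖A‖ := by
    rw [← inner_sub_left]; exact abs_real_inner_le_norm _ _
  have hAM : 2 * (‖u‖⁻¹ * ‖v‖⁻¹) ≤ (‖u‖ ^ 2)⁻¹ + (‖v‖ ^ 2)⁻¹ := by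
    simpa only [inv_pow, mul_assoc] using two_mul_le_add_sq ‖u‖⁻¹ ‖v‖⁻¹
  rw [inner_hessNorm_self, inner_hessNorm_self]
  calc _ ≤ 5 * ‖u - v‖ * ‖A‖ ^ 2 / (‖u‖ * ‖v‖) :=
        abs_inv_mul_sq_sub_sub_le hu' hv' (abs_real_inner_le_norm u A)
          (abs_real_inner_le_norm v A) (abs_norm_sub_norm_le u v) hab
    _ = 5 / 2 * ‖u - v‖ * ‖A‖ ^ 2 * (2 * (‖u‖⁻¹ * ‖v‖⁻¹)) := by field_simp
    _ ≤ 3 * ‖u - v‖ * ‖A‖ ^ 2 * ((‖u‖ ^ 2)⁻¹ + (‖v‖ ^ 2)⁻¹) := by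
        gcongr
        norm_num

end HessNorm

lemma Real.closedBall_subset_union_closedBall_half (c r : ℝ) :
    Metric.closedBall c r ⊆
      Metric.closedBall (c - r / 2) (r / 2) ∪ Metric.closedBall (c + r / 2) (r / 2) := by
  intro x hx
  simp only [Real.closedBall_eq_Icc, Set.mem_union, Set.mem_Icc] at hx ⊢
  by_cases hxc : x ≤ c
  · left; constructor <;> linarith
  · right; constructor <;> linarith

lemma MeasureTheory.Measure.measure_closedBall_le_div_two_pow {μ : Measure ℝ} {K : ℝ}
    (h : ∀ c r, 0 < r → μ (Metric.closedBall c r) ≤ ENNReal.ofReal (K * r ^ 2)) (j : ℕ) :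
    ∀ c r, 0 < r → μ (Metric.closedBall c r) ≤ ENNReal.ofReal (K * r ^ 2 / 2 ^ j) := by
  induction j with
  | zero => simpa using h
  | succ j ih =>
    intro c r hr
    calc μ (Metric.closedBall c r)
        ≤ μ (Metric.closedBall (c - r / 2) (r / 2)) + μ (Metric.closedBall (c + r / 2) (r / 2)) :=
          (measure_mono (Real.closedBall_subset_union_closedBall_half c r)).trans
            (measure_union_le _ _)
      _ ≤ ENNReal.ofReal (K * (r / 2) ^ 2 / 2 ^ j) + ENNReal.ofReal (K * (r / 2) ^ 2 / 2 ^ j) :=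
          add_le_add (ih _ _ (by positivity)) (ih _ _ (by positivity))
      _ = ENNReal.ofReal (K * r ^ 2 / 2 ^ (j + 1)) := by
          rw [← two_mul, ← ENNReal.ofReal_ofNat 2, ← ENNReal.ofReal_mul zero_le_two]
          congr 1
          ring

lemma MeasureTheory.Measure.eq_zero_of_measure_closedBall_le_mul_sq (μ : Measure ℝ) (K : ℝ)
    (h : ∀ c r, 0 < r → μ (Metric.closedBall c r) ≤ ENNReal.ofReal (K * r ^ 2)) : μ = 0 := by
  have hball : ∀ c r, 0 < r → μ (Metric.closedBall c r) = 0 := by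
    intro c r hr
    have hlim : Tendsto (fun j : ℕ => ENNReal.ofReal (K * r ^ 2 / 2 ^ j)) atTop (nhds 0) := by
      rw [← ENNReal.ofReal_zero]
      refine ENNReal.tendsto_ofReal ?_
      simpa [div_eq_mul_inv, ← inv_pow] using
        (tendsto_pow_atTop_nhds_zero_of_lt_one (by norm_num : (0 : ℝ) ≤ 2⁻¹)
          (by norm_num)).const_mul (K * r ^ 2)
    exact le_antisymm
      (ge_of_tendsto' hlim fun j => measure_closedBall_le_div_two_pow h j c r hr) (zero_le ..)
  rw [← measure_univ_eq_zero, ← Metric.iUnion_ball_nat_succ (0 : ℝ)]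
  exact measure_iUnion_null fun n =>
    measure_mono_null Metric.ball_subset_closedBall (hball 0 _ (by positivity))

lemma exists_pos_mul_norm_sq_le_inner_map_self {E : Type*} [NormedAddCommGroup E]
    [InnerProductSpace ℝ E] [FiniteDimensional ℝ E] (T : E →ₗ[ℝ] E)
    (hT : ∀ x, x ≠ 0 → 0 < ⟪T x, x⟫) : ∃ c, 0 < c ∧ ∀ x, c * ‖x‖ ^ 2 ≤ ⟪T x, x⟫ := by
  rcases subsingleton_or_nontrivial E with hE | hE
  · exact ⟨1, one_pos, fun x => by simp [Subsingleton.elim x 0]⟩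
  have hcont : Continuous fun x => ⟪T x, x⟫ :=
    T.continuous_of_finiteDimensional.inner continuous_id
  obtain ⟨y, hy, hmin⟩ := (isCompact_sphere (0 : E) 1).exists_isMinOn
    (NormedSpace.sphere_nonempty.mpr zero_le_one) hcont.continuousOn
  have hy1 : ‖y‖ = 1 := mem_sphere_zero_iff_norm.mp hy
  refine ⟨⟪T y, y⟫, hT y (norm_ne_zero_iff.mp (by simp [hy1])), fun x => ?_⟩
  rcases eq_or_ne x 0 with rfl | hx
  · simp
  have hx' : 0 < ‖x‖ := norm_pos_iff.mpr hx
  have hunit : ‖x‖⁻¹ • x ∈ Metric.sphere (0 : E) 1 := by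
    rw [mem_sphere_zero_iff_norm, norm_smul, norm_inv, norm_norm, inv_mul_cancel₀ hx'.ne']
  have hmin' : ⟪T y, y⟫ ≤ ‖x‖⁻¹ * (‖x‖⁻¹ * ⟪T x, x⟫) := by
    simpa only [Set.mem_ofPred_eq, map_smul, real_inner_smul_left, real_inner_smul_right] using
      hmin hunit
  calc ⟪T y, y⟫ * ‖x‖ ^ 2 ≤ ‖x‖⁻¹ * (‖x‖⁻¹ * ⟪T x, x⟫) * ‖x‖ ^ 2 := by gcongr
    _ = ⟪T x, x⟫ := by field_simp

lemma MeasureTheory.AEStronglyMeasurable.sub_const {E : Type*} [NormedAddCommGroup E]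
    {P : Measure Ω} {Z : Ω → E} (hZ : AEStronglyMeasurable Z P) (V : E) :
    AEStronglyMeasurable (fun ω => Z ω - V) P :=
  hZ.sub aestronglyMeasurable_const

lemma integrable_and_integral_le_of_lintegral_ofReal_le {P : Measure Ω} {f : Ω → ℝ}
    (hf : AEStronglyMeasurable f P) (hf0 : ∀ ω, 0 ≤ f ω) {B : ℝ} (hB : 0 ≤ B)
    (h : ∫⁻ ω, ENNReal.ofReal (f ω) ∂P ≤ ENNReal.ofReal B) :
    Integrable f P ∧ ∫ ω, f ω ∂P ≤ B := by
  have hfi : Integrable f P :=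
    ⟨hf, (hasFiniteIntegral_iff_ofReal (ae_of_all _ hf0)).mpr (h.trans_lt ENNReal.ofReal_lt_top)⟩
  refine ⟨hfi, (ENNReal.ofReal_le_ofReal_iff hB).mp ?_⟩
  rwa [ofReal_integral_eq_lintegral_ofReal hfi (ae_of_all _ hf0)]

section InvMomentBound

variable {E : Type*} [NormedAddCommGroup E] {P : Measure Ω} {Z : Ω → E} {C : ℝ}

def InvMomentBound (P : Measure Ω) (Z : Ω → E) (C : ℝ) : Prop :=
  ∀ V : E, (∫⁻ ω, ‖Z ω - V‖ₑ⁻¹ ∂P) ≤ ENNReal.ofReal C ∧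
    (∫⁻ ω, (‖Z ω - V‖ₑ ^ 2)⁻¹ ∂P) ≤ ENNReal.ofReal C

lemma InvMomentBound.integrable_inv_norm_sub (hb : InvMomentBound P Z C)
    (hZ : AEStronglyMeasurable Z P) (hC : 0 ≤ C) (V : E) :
    Integrable (fun ω => ‖Z ω - V‖⁻¹) P ∧ ∫ ω, ‖Z ω - V‖⁻¹ ∂P ≤ C := by
  refine integrable_and_integral_le_of_lintegral_ofReal_le (f := fun ω => ‖Z ω - V‖⁻¹)
    ((hZ.sub_const V).norm.aemeasurable.inv.aestronglyMeasurable)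
    (fun ω => by positivity) hC ((lintegral_mono fun ω => ?_).trans (hb V).1)
  rw [← ofReal_norm]
  exact ENNReal.ofReal_inv_le

lemma InvMomentBound.integrable_inv_norm_sub_sq (hb : InvMomentBound P Z C)
    (hZ : AEStronglyMeasurable Z P) (hC : 0 ≤ C) (V : E) :
    Integrable (fun ω => (‖Z ω - V‖ ^ 2)⁻¹) P ∧ ∫ ω, (‖Z ω - V‖ ^ 2)⁻¹ ∂P ≤ C := by
  refine integrable_and_integral_le_of_lintegral_ofReal_le (f := fun ω => (‖Z ω - V‖ ^ 2)⁻¹)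
    (((hZ.sub_const V).norm.pow 2).aemeasurable.inv.aestronglyMeasurable)
    (fun ω => by positivity) hC ((lintegral_mono fun ω => ?_).trans (hb V).2)
  rw [← ofReal_norm, ← ENNReal.ofReal_pow (norm_nonneg _)]
  exact ENNReal.ofReal_inv_le

lemma InvMomentBound.measure_norm_sub_le (hb : InvMomentBound P Z C)
    (hZ : AEStronglyMeasurable Z P) (V : E) {r : ℝ} (hr : 0 < r) :
    P {ω | ‖Z ω - V‖ ≤ r} ≤ ENNReal.ofReal (C * r ^ 2) := by
  have hf : AEMeasurable (fun ω => (‖Z ω - V‖ₑ ^ 2)⁻¹) P :=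
    ((hZ.sub_const V).enorm.pow_const 2).inv
  have hsub : {ω | ‖Z ω - V‖ ≤ r} ⊆ {ω | (ENNReal.ofReal (r ^ 2))⁻¹ ≤ (‖Z ω - V‖ₑ ^ 2)⁻¹} := by
    intro ω hω
    refine ENNReal.inv_le_inv.mpr ?_
    rw [← ofReal_norm, ← ENNReal.ofReal_pow (norm_nonneg _)]
    exact ENNReal.ofReal_le_ofReal (pow_le_pow_left₀ (norm_nonneg _) hω 2)
  calc P {ω | ‖Z ω - V‖ ≤ r}
      ≤ (∫⁻ ω, (‖Z ω - V‖ₑ ^ 2)⁻¹ ∂P) / (ENNReal.ofReal (r ^ 2))⁻¹ :=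
        (measure_mono hsub).trans (meas_ge_le_lintegral_div hf (by simp) (by simp [hr.ne']))
    _ ≤ ENNReal.ofReal C * ENNReal.ofReal (r ^ 2) := by
        rw [div_eq_mul_inv, inv_inv]
        gcongr
        exact (hb V).2
    _ = ENNReal.ofReal (C * r ^ 2) := (ENNReal.ofReal_mul' (by positivity)).symm

end InvMomentBound

lemma InvMomentBound.not_ae_exists_eq_smul {E : Type*} [NormedAddCommGroup E]
    [InnerProductSpace ℝ E] {P : Measure Ω} [NeZero P] {Z : Ω → E} {C : ℝ}
    (hb : InvMomentBound P Z C) (hZ : AEStronglyMeasurable Z P) (V : E) {A : E} (hA : A ≠ 0) :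
    ¬ ∀ᵐ ω ∂P, ∃ r : ℝ, Z ω - V = r • A := by
  intro hline
  have hA' : 0 < ‖A‖ := norm_pos_iff.mpr hA
  set coord : Ω → ℝ := fun ω => ⟪Z ω - V, A⟫ / ‖A‖ ^ 2
  have hcoord : AEMeasurable coord P :=
    ((hZ.sub_const V).inner aestronglyMeasurable_const).aemeasurable.div_const _
  have hnorm : ∀ᵐ ω ∂P, ∀ c : ℝ, ‖Z ω - (V + c • A)‖ = |coord ω - c| * ‖A‖ := by
    filter_upwards [hline] with ω ⟨s, hs⟩ c
    have hcoord_eq : coord ω = s := by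
      simp only [coord, hs, real_inner_smul_left, real_inner_self_eq_norm_sq]
      field_simp
    rw [hcoord_eq, sub_add_eq_sub_sub, hs, ← sub_smul, norm_smul, Real.norm_eq_abs]
  -- the law of `coord` gives mass `O(r²)` to intervals of length `2r`, so it vanishes
  have hball : ∀ c r, 0 < r →
      P.map coord (Metric.closedBall c r) ≤ ENNReal.ofReal (C * ‖A‖ ^ 2 * r ^ 2) := by
    intro c r hr
    rw [Measure.map_apply_of_aemeasurable hcoord measurableSet_closedBall]
    calc P (coord ⁻¹' Metric.closedBall c r) ≤ P {ω | ‖Z ω - (V + c • A)‖ ≤ r * ‖A‖} := by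
          refine measure_mono_ae ?_
          filter_upwards [hnorm] with ω hω hmem
          have hmem' : coord ω ∈ Metric.closedBall c r := hmem
          rw [Metric.mem_closedBall, Real.dist_eq] at hmem'
          show ‖Z ω - (V + c • A)‖ ≤ r * ‖A‖
          rw [hω c]
          gcongr
      _ ≤ ENNReal.ofReal (C * (r * ‖A‖) ^ 2) :=
          hb.measure_norm_sub_le hZ _ (by positivity)
      _ = ENNReal.ofReal (C * ‖A‖ ^ 2 * r ^ 2) := by ring_nf
  have hzero := Measure.eq_zero_of_measure_closedBall_le_mul_sq _ _ hball
  rw [Measure.map_eq_zero_iff hcoord] at hzero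
  exact NeZero.ne P hzero

lemma MeasureTheory.AEStronglyMeasurable.hessNorm {E : Type*} [NormedAddCommGroup E]
    [InnerProductSpace ℝ E] {P : Measure Ω} {u : Ω → E} (hu : AEStronglyMeasurable u P) (A : E) :
    AEStronglyMeasurable (fun ω => hessNorm (u ω) A) P := by
  have hinv : ∀ {f : Ω → ℝ}, AEStronglyMeasurable f P → AEStronglyMeasurable (fun ω => (f ω)⁻¹) P :=
    fun hf => hf.aemeasurable.inv.aestronglyMeasurable
  exact (hinv hu.norm).smul (aestronglyMeasurable_const.sub
    ((hinv (hu.norm.pow 2)).smul ((hu.inner aestronglyMeasurable_const).smul hu)))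

section MedianHess

variable {E : Type*} [NormedAddCommGroup E] [InnerProductSpace ℝ E]
  {P : Measure Ω} {Z : Ω → E} {C : ℝ}

def medianHess (P : Measure Ω) (Z : Ω → E) (V A : E) : E := ∫ ω, hessNorm (Z ω - V) A ∂P

lemma integrable_hessNorm {u : Ω → E} (hu : AEStronglyMeasurable u P)
    (hu1 : Integrable (fun ω => ‖u ω‖⁻¹) P) (A : E) :
    Integrable (fun ω => hessNorm (u ω) A) P :=
  ((hu1.const_mul 2).mul_const ‖A‖).mono' (hu.hessNorm A)
    (ae_of_all _ fun _ => norm_hessNorm_le _ _)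

lemma integrable_inner_hessNorm_self {u : Ω → E} (hu : AEStronglyMeasurable u P)
    (hu1 : Integrable (fun ω => ‖u ω‖⁻¹) P) (A : E) :
    Integrable (fun ω => ⟪hessNorm (u ω) A, A⟫) P :=
  (integrable_hessNorm hu hu1 A).inner_const A

lemma integral_inner_hessNorm_self_le_of_norm_sub_le {u v : Ω → E}
    (hu : AEStronglyMeasurable u P) (hv : AEStronglyMeasurable v P)
    (hu1 : Integrable (fun ω => ‖u ω‖⁻¹) P) (hv1 : Integrable (fun ω => ‖v ω‖⁻¹) P)
    (hu2 : Integrable (fun ω => (‖u ω‖ ^ 2)⁻¹) P) (hv2 : Integrable (fun ω => (‖v ω‖ ^ 2)⁻¹) P)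
    {S : Set Ω} (hS : MeasurableSet S) {D : ℝ} (hD0 : 0 ≤ D) (hD : ∀ ω ∈ Sᶜ, ‖u ω - v ω‖ ≤ D)
    (A : E) :
    ∫ ω, ⟪hessNorm (v ω) A, A⟫ ∂P ≤ ∫ ω, ⟪hessNorm (u ω) A, A⟫ ∂P
      + ‖A‖ ^ 2 * ∫ ω in S, ‖v ω‖⁻¹ ∂P
      + 3 * D * ‖A‖ ^ 2 * ∫ ω, ((‖u ω‖ ^ 2)⁻¹ + (‖v ω‖ ^ 2)⁻¹) ∂P := by
  set w : Ω → ℝ := fun ω => 3 * D * ‖A‖ ^ 2 * ((‖u ω‖ ^ 2)⁻¹ + (‖v ω‖ ^ 2)⁻¹)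
  have iu := integrable_inner_hessNorm_self hu hu1 A
  have iv := integrable_inner_hessNorm_self hv hv1 A
  have iw : Integrable w P := (hu2.add hv2).const_mul _
  have hon : ∫ ω in S, ⟪hessNorm (v ω) A, A⟫ ∂P ≤ ‖A‖ ^ 2 * ∫ ω in S, ‖v ω‖⁻¹ ∂P := by
    rw [← integral_const_mul]
    refine setIntegral_mono_on iv.integrableOn (hv1.const_mul _).integrableOn hS fun ω _ => ?_
    rw [mul_comm]
    exact inner_hessNorm_self_le _ _
  have hoff : ∫ ω in Sᶜ, ⟪hessNorm (v ω) A, A⟫ ∂P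
      ≤ ∫ ω in Sᶜ, ⟪hessNorm (u ω) A, A⟫ ∂P + ∫ ω in Sᶜ, w ω ∂P := by
    rw [← integral_add iu.integrableOn iw.integrableOn]
    refine setIntegral_mono_on iv.integrableOn (iu.add iw).integrableOn hS.compl fun ω hω => ?_
    have hlip := (abs_le.mp (abs_inner_hessNorm_self_sub_le (u ω) (v ω) A)).1
    have hw : 3 * ‖u ω - v ω‖ * ‖A‖ ^ 2 * ((‖u ω‖ ^ 2)⁻¹ + (‖v ω‖ ^ 2)⁻¹) ≤ w ω := by
      simp only [w]
      gcongr
      exact hD ω hω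
    linarith
  have hw0 : ∀ ω, 0 ≤ w ω := fun ω => by positivity
  calc ∫ ω, ⟪hessNorm (v ω) A, A⟫ ∂P
      = ∫ ω in S, ⟪hessNorm (v ω) A, A⟫ ∂P + ∫ ω in Sᶜ, ⟪hessNorm (v ω) A, A⟫ ∂P :=
        (integral_add_compl hS iv).symm
    _ ≤ ‖A‖ ^ 2 * ∫ ω in S, ‖v ω‖⁻¹ ∂P
          + (∫ ω, ⟪hessNorm (u ω) A, A⟫ ∂P + ∫ ω, w ω ∂P) := by
        grw [hon, hoff,
          setIntegral_le_integral iu (ae_of_all _ fun ω => inner_hessNorm_self_nonneg _ _),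
          setIntegral_le_integral iw (ae_of_all _ hw0)]
    _ = _ := by
        rw [integral_const_mul]
        ring

lemma inner_medianHess [CompleteSpace E] (hZ : AEStronglyMeasurable Z P) {V : E}
    (hint : Integrable (fun ω => ‖Z ω - V‖⁻¹) P) (A B : E) :
    ⟪medianHess P Z V A, B⟫ = ∫ ω, ⟪hessNorm (Z ω - V) A, B⟫ ∂P := by
  rw [medianHess, real_inner_comm, ← integral_inner (integrable_hessNorm (hZ.sub_const V) hint A) B]
  simp only [real_inner_comm B]

lemma inner_medianHess_comm [CompleteSpace E] (hZ : AEStronglyMeasurable Z P) {V : E}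
    (hint : Integrable (fun ω => ‖Z ω - V‖⁻¹) P) (A B : E) :
    ⟪medianHess P Z V A, B⟫ = ⟪A, medianHess P Z V B⟫ := by
  rw [inner_medianHess hZ hint, real_inner_comm, inner_medianHess hZ hint]
  simp only [inner_hessNorm_comm _ A, real_inner_comm A]

lemma inner_medianHess_self_nonneg [CompleteSpace E] (hZ : AEStronglyMeasurable Z P) {V : E}
    (hint : Integrable (fun ω => ‖Z ω - V‖⁻¹) P) (A : E) :
    0 ≤ ⟪medianHess P Z V A, A⟫ := by
  rw [inner_medianHess hZ hint]
  exact integral_nonneg fun ω => inner_hessNorm_self_nonneg _ _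

lemma inner_medianHess_self_le [CompleteSpace E] (hZ : AEStronglyMeasurable Z P) {V : E}
    (hint : Integrable (fun ω => ‖Z ω - V‖⁻¹) P) (hC : ∫ ω, ‖Z ω - V‖⁻¹ ∂P ≤ C) (A : E) :
    ⟪medianHess P Z V A, A⟫ ≤ C * ‖A‖ ^ 2 := by
  rw [inner_medianHess hZ hint]
  calc ∫ ω, ⟪hessNorm (Z ω - V) A, A⟫ ∂P ≤ ∫ ω, ‖Z ω - V‖⁻¹ * ‖A‖ ^ 2 ∂P :=
        integral_mono (integrable_inner_hessNorm_self (hZ.sub_const V) hint A) (hint.mul_const _)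
          fun ω => inner_hessNorm_self_le _ _
    _ = (∫ ω, ‖Z ω - V‖⁻¹ ∂P) * ‖A‖ ^ 2 := integral_mul_const _ _
    _ ≤ C * ‖A‖ ^ 2 := by gcongr

lemma inner_medianHess_self_pos [CompleteSpace E] [NeZero P] (hZ : AEStronglyMeasurable Z P)
    (hb : InvMomentBound P Z C) (hC : 0 ≤ C) (V : E) {A : E} (hA : A ≠ 0) :
    0 < ⟪medianHess P Z V A, A⟫ := by
  have hint := (hb.integrable_inv_norm_sub hZ hC V).1
  rw [inner_medianHess hZ hint]
  refine (integral_nonneg fun ω => inner_hessNorm_self_nonneg _ _).lt_of_ne fun h => ?_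
  have hzero := (integral_eq_zero_iff_of_nonneg (fun ω => inner_hessNorm_self_nonneg _ _)
    (integrable_inner_hessNorm_self (hZ.sub_const V) hint A)).mp h.symm
  refine hb.not_ae_exists_eq_smul hZ V hA ?_
  filter_upwards [hzero] with ω hω
  exact exists_eq_smul_of_inner_hessNorm_self_eq_zero hA hω

lemma medianHess_add (hZ : AEStronglyMeasurable Z P) {V : E}
    (hint : Integrable (fun ω => ‖Z ω - V‖⁻¹) P) (A B : E) :
    medianHess P Z V (A + B) = medianHess P Z V A + medianHess P Z V B := by
  simp only [medianHess, hessNorm_add]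
  exact integral_add (integrable_hessNorm (hZ.sub_const V) hint A)
    (integrable_hessNorm (hZ.sub_const V) hint B)

lemma medianHess_smul (V : E) (c : ℝ) (A : E) :
    medianHess P Z V (c • A) = c • medianHess P Z V A := by
  simp only [medianHess, hessNorm_smul, integral_smul]

lemma exists_pos_mul_norm_sq_le_inner_medianHess_self [FiniteDimensional ℝ E] [NeZero P]
    (hZ : AEStronglyMeasurable Z P) (hb : InvMomentBound P Z C) (hC : 0 ≤ C) (V : E) :
    ∃ c, 0 < c ∧ ∀ A, c * ‖A‖ ^ 2 ≤ ⟪medianHess P Z V A, A⟫ :=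
  exists_pos_mul_norm_sq_le_inner_map_self
    { toFun := medianHess P Z V
      map_add' := medianHess_add hZ (hb.integrable_inv_norm_sub hZ hC V).1
      map_smul' := medianHess_smul V }
    fun _ hA => inner_medianHess_self_pos hZ hb hC V hA

end MedianHess

lemma continuous_Ymat (h : EuclideanSpace ℝ (Fin d)) : Continuous fun x => Ymat x h :=
  (PiLp.continuous_toLp 2 _).comp (by fun_prop)

def outerProd {ι κ : Type*} [Fintype ι] [Fintype κ] (a : EuclideanSpace ℝ ι)
    (b : EuclideanSpace ℝ κ) : EuclideanSpace ℝ (ι × κ) :=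
  (WithLp.equiv 2 _).symm fun p => a p.1 * b p.2

lemma norm_outerProd {ι κ : Type*} [Fintype ι] [Fintype κ] (a : EuclideanSpace ℝ ι)
    (b : EuclideanSpace ℝ κ) : ‖outerProd a b‖ = ‖a‖ * ‖b‖ := by
  simp only [EuclideanSpace.norm_eq, ← Real.sqrt_mul (Finset.sum_nonneg fun _ _ => sq_nonneg _),
    Finset.sum_mul_sum, ← Fintype.sum_prod_type', outerProd, WithLp.equiv_symm_apply,
    Real.norm_eq_abs, sq_abs, mul_pow]

lemma Ymat_sub_Ymat (x h m : EuclideanSpace ℝ (Fin d)) :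
    Ymat x h - Ymat x m = outerProd (m - h) (x - h) + outerProd (x - m) (m - h) := by
  ext p
  simp only [Ymat, outerProd, PiLp.sub_apply, PiLp.add_apply, WithLp.equiv_symm_apply]
  ring

lemma norm_Ymat_sub_Ymat_le {x h m : EuclideanSpace ℝ (Fin d)} {R : ℝ} (hx : ‖x‖ ≤ R)
    (hh : ‖h - m‖ ≤ 1) : ‖Ymat x h - Ymat x m‖ ≤ ‖h - m‖ * (2 * R + 2 * ‖m‖ + 1) := by
  have hxh : ‖x - h‖ ≤ R + ‖m‖ + 1 := by
    calc ‖x - h‖ = ‖(x - m) - (h - m)‖ := by congr 1; abel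
      _ ≤ ‖x‖ + ‖m‖ + ‖h - m‖ := (norm_sub_le _ _).trans (by gcongr; exact norm_sub_le _ _)
      _ ≤ R + ‖m‖ + 1 := by gcongr
  have hxm : ‖x - m‖ ≤ R + ‖m‖ := (norm_sub_le _ _).trans (by gcongr)
  rw [Ymat_sub_Ymat]
  calc ‖outerProd (m - h) (x - h) + outerProd (x - m) (m - h)‖
      ≤ ‖h - m‖ * ‖x - h‖ + ‖x - m‖ * ‖h - m‖ := by
        grw [norm_add_le, norm_outerProd, norm_outerProd, norm_sub_rev m h]
    _ ≤ ‖h - m‖ * (2 * R + 2 * ‖m‖ + 1) := by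
        rw [mul_comm ‖x - m‖, ← mul_add]
        exact mul_le_mul_of_nonneg_left (by linarith) (norm_nonneg _)

lemma norm_Ymat_sub_sub_Ymat_sub_le {x h m : EuclideanSpace ℝ (Fin d)} {R : ℝ} (hx : ‖x‖ ≤ R)
    (hh : ‖h - m‖ ≤ 1) (V Γ : Mat d) :
    ‖(Ymat x h - V) - (Ymat x m - Γ)‖ ≤ ‖h - m‖ * (2 * R + 2 * ‖m‖ + 1) + ‖V - Γ‖ := by
  calc _ = ‖(Ymat x h - Ymat x m) - (V - Γ)‖ := by congr 1; abel
    _ ≤ _ := by grw [norm_sub_le, norm_Ymat_sub_Ymat_le hx hh]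

lemma tendsto_setIntegral_lt_atTop {P : Measure Ω} {g : Ω → ℝ} (hg : Integrable g P)
    {W : Ω → ℝ} (hW : Measurable W) :
    Tendsto (fun R : ℝ => ∫ ω in {ω | R < W ω}, g ω ∂P) atTop (nhds 0) := by
  have hempty : (⋂ R : ℝ, {ω | R < W ω}) = ∅ :=
    Set.eq_empty_of_forall_notMem fun ω hω => lt_irrefl (W ω) (Set.mem_iInter.mp hω (W ω))
  simpa [hempty] using tendsto_setIntegral_of_antitone
    (fun R => measurableSet_lt measurable_const hW)
    (fun R R' hRR' ω (hω : R' < W ω) => (show R < W ω from hRR'.trans_lt hω))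
    ⟨0, hg.integrableOn⟩

section Ymat

variable {P : Measure Ω} {X : Ω → EuclideanSpace ℝ (Fin d)}

lemma aestronglyMeasurable_Ymat (hX : Measurable X) (h : EuclideanSpace ℝ (Fin d)) :
    AEStronglyMeasurable (fun ω => Ymat (X ω) h) P :=
  ((continuous_Ymat h).measurable.comp hX).aestronglyMeasurable

lemma hessG_eq_medianHess (h : EuclideanSpace ℝ (Fin d)) (V : Mat d) :
    hessG P X h V = medianHess P (fun ω => Ymat (X ω) h) V := rfl

lemma exists_half_mul_norm_sq_le_inner_hessG_self (hX : Measurable X) {C : ℝ} (hC : 0 < C)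
    (hA3 : ∀ h, InvMomentBound P (fun ω => Ymat (X ω) h) C) {m : EuclideanSpace ℝ (Fin d)}
    {Γ : Mat d} {c : ℝ} (hc : 0 < c) (hcoer : ∀ A, c * ‖A‖ ^ 2 ≤ ⟪hessG P X m Γ A, A⟫) :
    ∃ ε ε' : ℝ, 0 < ε ∧ 0 < ε' ∧
      ∀ h : EuclideanSpace ℝ (Fin d), ‖h - m‖ ≤ ε → ∀ V : Mat d, ‖V - Γ‖ ≤ ε' →
        ∀ A : Mat d, c / 2 * ‖A‖ ^ 2 ≤ ⟪hessG P X h V A, A⟫ := by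
  have hZ := aestronglyMeasurable_Ymat (P := P) hX
  have hb1 := fun h V => (hA3 h).integrable_inv_norm_sub (hZ h) hC.le V
  have hb2 := fun h V => (hA3 h).integrable_inv_norm_sub_sq (hZ h) hC.le V
  -- `Y(h) - Y(m)` is only small where `X` is bounded, so cut off a tail of `X` first
  obtain ⟨R, hR0, hR⟩ : ∃ R : ℝ, 0 ≤ R ∧ ∫ ω in {ω | R < ‖X ω‖}, ‖Ymat (X ω) m - Γ‖⁻¹ ∂P < c / 4 :=
    ((eventually_ge_atTop 0).and ((tendsto_setIntegral_lt_atTop (hb1 m Γ).1 hX.norm).eventually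
      (gt_mem_nhds (by positivity)))).exists
  set L := 2 * R + 2 * ‖m‖ + 1
  set δ := c / (24 * C)
  have hL : 0 < L := by positivity
  refine ⟨min 1 (δ / (2 * L)), δ / 2, lt_min one_pos (by positivity), by positivity,
    fun h hh V hV A => ?_⟩
  have hoff : ∀ ω ∈ {ω | R < ‖X ω‖}ᶜ, ‖(Ymat (X ω) h - V) - (Ymat (X ω) m - Γ)‖ ≤ δ :=
    fun ω hω => calc
      _ ≤ ‖h - m‖ * L + ‖V - Γ‖ :=
          norm_Ymat_sub_sub_Ymat_sub_le (not_lt.mp hω) (hh.trans (min_le_left _ _)) V Γ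
      _ ≤ δ / (2 * L) * L + δ / 2 := by grw [hh, hV, min_le_right]
      _ = δ := by field_simp; ring
  have hcomp := integral_inner_hessNorm_self_le_of_norm_sub_le ((hZ h).sub_const V)
    ((hZ m).sub_const Γ) (hb1 h V).1 (hb1 m Γ).1 (hb2 h V).1 (hb2 m Γ).1
    (measurableSet_lt measurable_const hX.norm) (by positivity) hoff A
  have hsq : ∫ ω, ((‖Ymat (X ω) h - V‖ ^ 2)⁻¹ + (‖Ymat (X ω) m - Γ‖ ^ 2)⁻¹) ∂P ≤ 2 * C := by
    rw [integral_add (hb2 h V).1 (hb2 m Γ).1]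
    linarith [(hb2 h V).2, (hb2 m Γ).2]
  have hcm := hcoer A
  rw [hessG_eq_medianHess, inner_medianHess (hZ m) (hb1 m Γ).1] at hcm
  rw [hessG_eq_medianHess, inner_medianHess (hZ h) (hb1 h V).1]
  have hδ : 3 * δ * (2 * C) = c / 4 := by simp only [δ]; field_simp; ring
  have hA0 : 0 ≤ ‖A‖ ^ 2 := by positivity
  nlinarith [mul_le_mul_of_nonneg_left hR.le hA0,
    mul_le_mul_of_nonneg_left hsq (show 0 ≤ 3 * δ * ‖A‖ ^ 2 by positivity)]

end Ymat

theorem stmt_13_general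
    {d : ℕ} (P : Measure Ω) [IsProbabilityMeasure P]
    (X : Ω → EuclideanSpace ℝ (Fin d)) (hX : Measurable X)
    (m : EuclideanSpace ℝ (Fin d))
    (Γ : Mat d)
    -- Assumption 3(b)
    (C : ℝ) (hC : 0 < C)
    (hA3 : ∀ (h : EuclideanSpace ℝ (Fin d)) (V : Mat d),
      (∫⁻ ω, (‖Ymat (X ω) h - V‖₊ : ℝ≥0∞)⁻¹ ∂P) ≤ ENNReal.ofReal C ∧
      (∫⁻ ω, ((‖Ymat (X ω) h - V‖₊ : ℝ≥0∞) ^ 2)⁻¹ ∂P) ≤ ENNReal.ofReal C)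
    :
    (∀ (h : EuclideanSpace ℝ (Fin d)) (V A B : Mat d),
      ⟪hessG P X h V A, B⟫ = ⟪A, hessG P X h V B⟫) ∧
    (∀ (h : EuclideanSpace ℝ (Fin d)) (V A : Mat d),
      0 ≤ ⟪hessG P X h V A, A⟫ ∧ ⟪hessG P X h V A, A⟫ ≤ C * ‖A‖ ^ 2) ∧
    ∃ cm : ℝ, 0 < cm ∧
      (∀ A : Mat d, cm * ‖A‖ ^ 2 ≤ ⟪hessG P X m Γ A, A⟫) ∧
      ∃ ε ε' : ℝ, 0 < ε ∧ 0 < ε' ∧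
        ∀ h : EuclideanSpace ℝ (Fin d), ‖h - m‖ ≤ ε →
          ∀ V : Mat d, ‖V - Γ‖ ≤ ε' →
            ∀ A : Mat d, cm / 2 * ‖A‖ ^ 2 ≤ ⟪hessG P X h V A, A⟫ := by
  have hZ := aestronglyMeasurable_Ymat (P := P) hX
  have hb1 := fun h V => (InvMomentBound.integrable_inv_norm_sub (hA3 h) (hZ h) hC.le V)
  obtain ⟨cm, hcm, hcoer⟩ :=
    exists_pos_mul_norm_sq_le_inner_medianHess_self (hZ m) (hA3 m) hC.le Γ
  refine ⟨fun h V => inner_medianHess_comm (hZ h) (hb1 h V).1,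
    fun h V A => ⟨inner_medianHess_self_nonneg (hZ h) (hb1 h V).1 A,
      inner_medianHess_self_le (hZ h) (hb1 h V).1 (hb1 h V).2 A⟩,
    cm, hcm, hcoer, exists_half_mul_norm_sq_le_inner_hessG_self hX hC hA3 hcm hcoer⟩

/-- Spectral properties of the Hessian operators (Proposition B.1 of the paper):
(i) every `∇²G_h(V)` is a self-adjoint operator on `S(H)` whose eigenvalues lie in `[0, C]`,
i.e. `0 ≤ ⟪∇²G_h(V)(A), A⟫_F ≤ C‖A‖_F²`; (ii) there is `c_m > 0` with
`⟪∇²G_m(Γ_m)(A), A⟫_F ≥ c_m‖A‖_F²`; (iii) there are `ε, ε' > 0` such that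
`⟪∇²G_h(V)(A), A⟫_F ≥ (c_m/2)‖A‖_F²` whenever `‖h − m‖ ≤ ε` and `‖V − Γ_m‖_F ≤ ε'`. -/
theorem stmt_13
    {d : ℕ} (hd : 1 ≤ d) (P : Measure Ω) [IsProbabilityMeasure P]
    (X : Ω → EuclideanSpace ℝ (Fin d)) (hX : Measurable X)
    -- `m` is the geometric median of `X`: the unique minimizer of `u ↦ E[‖X − u‖ − ‖X‖]`
    (m : EuclideanSpace ℝ (Fin d))
    (hm : ∀ u, (∫ ω, (‖X ω - m‖ - ‖X ω‖) ∂P) ≤ ∫ ω, (‖X ω - u‖ - ‖X ω‖) ∂P)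
    (hm_unique : ∀ u, (∀ v, (∫ ω, (‖X ω - u‖ - ‖X ω‖) ∂P) ≤
      ∫ ω, (‖X ω - v‖ - ‖X ω‖) ∂P) → u = m)
    -- `Γ` is the median covariation matrix: the unique minimizer of `G_m`
    (Γ : Mat d)
    (hΓ : ∀ V, Gfun P X m Γ ≤ Gfun P X m V)
    (hΓ_unique : ∀ V, (∀ W, Gfun P X m V ≤ Gfun P X m W) → V = Γ)
    -- Assumption 1
    (hA1 : ∃ u₁ u₂ : EuclideanSpace ℝ (Fin d), ‖u₁‖ = 1 ∧ ‖u₂‖ = 1 ∧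
      LinearIndependent ℝ ![u₁, u₂] ∧
      0 < evariance (fun ω => ⟪u₁, X ω⟫) P ∧ 0 < evariance (fun ω => ⟪u₂, X ω⟫) P)
    -- Assumption 2
    (hA2 : ∃ V₁ V₂ : Mat d, ‖V₁‖ = 1 ∧ ‖V₂‖ = 1 ∧ LinearIndependent ℝ ![V₁, V₂] ∧
      0 < evariance (fun ω => ⟪V₁, Ymat (X ω) m⟫) P ∧
      0 < evariance (fun ω => ⟪V₂, Ymat (X ω) m⟫) P)
    -- Assumption 3(b)
    (C : ℝ) (hC : 0 < C)
    (hA3 : ∀ (h : EuclideanSpace ℝ (Fin d)) (V : Mat d),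
      (∫⁻ ω, (‖Ymat (X ω) h - V‖₊ : ℝ≥0∞)⁻¹ ∂P) ≤ ENNReal.ofReal C ∧
      (∫⁻ ω, ((‖Ymat (X ω) h - V‖₊ : ℝ≥0∞) ^ 2)⁻¹ ∂P) ≤ ENNReal.ofReal C)
    :
    (∀ (h : EuclideanSpace ℝ (Fin d)) (V A B : Mat d),
      ⟪hessG P X h V A, B⟫ = ⟪A, hessG P X h V B⟫) ∧
    (∀ (h : EuclideanSpace ℝ (Fin d)) (V A : Mat d),
      0 ≤ ⟪hessG P X h V A, A⟫ ∧ ⟪hessG P X h V A, A⟫ ≤ C * ‖A‖ ^ 2) ∧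
    ∃ cm : ℝ, 0 < cm ∧
      (∀ A : Mat d, cm * ‖A‖ ^ 2 ≤ ⟪hessG P X m Γ A, A⟫) ∧
      ∃ ε ε' : ℝ, 0 < ε ∧ 0 < ε' ∧
        ∀ h : EuclideanSpace ℝ (Fin d), ‖h - m‖ ≤ ε →
          ∀ V : Mat d, ‖V - Γ‖ ≤ ε' →
            ∀ A : Mat d, cm / 2 * ‖A‖ ^ 2 ≤ ⟪hessG P X h V A, A⟫ :=
  stmt_13_general P X hX m Γ C hC hA3
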